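/- Let (X,G,Φ) be a Cantor action, let f ∈ G(Φ) be a non-Hausdorff element at x ∈ X, and let {U_ℓ} be an adapted neighborhood basis at x with group chain G_ℓ = G_{U_ℓ}. Define for each ℓ the stabilizer group K_ℓ := {h ∈ G(Φ) : h(z) = z for all z ∈ U_ℓ} and the centralizer group Z_ℓ := {h ∈ G(Φ) : h(x) = x and h ∘ Φ(g) = Φ(g) ∘ h for all g ∈ G_ℓ}. Then there are infinitely many ℓ for which Z_ℓ is a proper subset of K_ℓ; that is, the action is dynamically wild. -/

import Mathlib

open Set Topology Filter

section CantorActionDefs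

variable {X : Type*} [MetricSpace X] {G : Type*} [Group G]

/-- `Φ : G → Homeo(X)` is a group homomorphism, i.e. an action of `G` on `X` by
homeomorphisms. -/
def IsActionHom (Φ : G → X ≃ₜ X) : Prop :=
  (∀ x : X, Φ 1 x = x) ∧ ∀ g h : G, ∀ x : X, Φ (g * h) x = Φ g (Φ h x)

/-- The action is minimal: every orbit is dense. -/
def IsMinimalAction (Φ : G → X ≃ₜ X) : Prop :=
  ∀ x : X, Dense (Set.range fun g : G => Φ g x)

/-- The family `{Φ g : g ∈ G}` is equicontinuous with respect to the metric on `X`. -/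
def IsEquicontinuousAction (Φ : G → X ≃ₜ X) : Prop :=
  ∀ ε : ℝ, 0 < ε → ∃ δ : ℝ, 0 < δ ∧
    ∀ g : G, ∀ x y : X, dist x y < δ → dist (Φ g x) (Φ g y) < ε

/-- A Cantor action: a minimal equicontinuous action by homeomorphisms. -/
def IsCantorAction (Φ : G → X ≃ₜ X) : Prop :=
  IsActionHom Φ ∧ IsMinimalAction Φ ∧ IsEquicontinuousAction Φ

/-- A clopen subset adapted to the action: nonempty, clopen, and any translate meeting it
equals it. -/
def IsAdapted (Φ : G → X ≃ₜ X) (U : Set X) : Prop :=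
  U.Nonempty ∧ IsClopen U ∧ ∀ g : G, (Φ g '' U ∩ U).Nonempty → Φ g '' U = U

/-- The Ellis (closure) group `G(Φ)`: the closure of `{Φ g : g ∈ G}` in `C(X,X)` with the
compact-open topology. -/
def actionClosure (Φ : G → X ≃ₜ X) : Set C(X, X) :=
  closure (Set.range fun g : G => (Φ g : C(X, X)))

/-- An adapted neighborhood basis at `x`: a properly descending chain of adapted clopen
sets starting at `X`, containing `x`, with intersection `{x}`. -/
def IsAdaptedBasis (Φ : G → X ≃ₜ X) (x : X) (U : ℕ → Set X) : Prop :=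
  U 0 = Set.univ ∧ (∀ ℓ : ℕ, IsAdapted Φ (U ℓ)) ∧ (∀ ℓ : ℕ, x ∈ U ℓ) ∧
    (∀ ℓ : ℕ, U (ℓ + 1) ⊂ U ℓ) ∧ (⋂ ℓ : ℕ, U ℓ) = ({x} : Set X)

/-- The stabilizer chain `K_ℓ`: elements of the Ellis group fixing `U ℓ` pointwise. -/
def stabChain (Φ : G → X ≃ₜ X) (U : ℕ → Set X) (ℓ : ℕ) : Set C(X, X) :=
  {f ∈ actionClosure Φ | ∀ z ∈ U ℓ, f z = z}

/-- The stabilizer chain is eventually constant (the action is stable along `U`). -/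
def IsStableChain (Φ : G → X ≃ₜ X) (U : ℕ → Set X) : Prop :=
  ∃ ℓ₀ : ℕ, ∀ ℓ : ℕ, ℓ₀ ≤ ℓ → stabChain Φ U ℓ = stabChain Φ U ℓ₀

/-- The action of the Ellis group is locally completely quasi-analytic. -/
def IsLCQA (Φ : G → X ≃ₜ X) : Prop :=
  ∃ ε : ℝ, 0 < ε ∧ ∀ U : Set X, IsAdapted Φ U → Metric.diam U < ε →
    ∀ V : Set X, IsAdapted Φ V → V ⊆ U →
      ∀ f₁ ∈ actionClosure Φ, ∀ f₂ ∈ actionClosure Φ,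
        (∀ z ∈ V, f₁ z = f₂ z) → ∀ z ∈ U, f₁ z = f₂ z

/-- `f` is a non-Hausdorff element of the Ellis group at `x`. -/
def IsNonHausdorffElem (Φ : G → X ≃ₜ X) (f : C(X, X)) (x : X) : Prop :=
  f ∈ actionClosure Φ ∧ f x = x ∧
    (∀ W : Set X, IsClopen W → x ∈ W → ¬ ∀ z ∈ W, f z = z) ∧
    ∃ (xs : ℕ → X) (W : ℕ → Set X), Filter.Tendsto xs Filter.atTop (nhds x) ∧
      ∀ i : ℕ, xs i ∈ W i ∧ IsClopen (W i) ∧ ⇑f '' W i = W i ∧ ∀ z ∈ W i, f z = z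

/-- The restrictions to an invariant set `U` of the maps `Φ g` with `Φ g (U) = U`,
as elements of `C(U,U)`. -/
def restrictedMaps (Φ : G → X ≃ₜ X) (U : Set X) : Set C(U, U) :=
  {u : C(U, U) | ∃ g : G, Φ g '' U = U ∧ ∀ z : U, (u z : X) = Φ g (z : X)}

/-- The stabilizer subgroup `G_U = {g : G | Φ g (U) = U}` of a set `U`. -/
def setStabilizer (Φ : G → X ≃ₜ X) (hΦ : IsActionHom Φ) (U : Set X) : Subgroup G where
  carrier := {g : G | Φ g '' U = U}
  one_mem' := by
    show ⇑(Φ 1) '' U = U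
    have h : ⇑(Φ 1) = id := funext hΦ.1
    rw [h, Set.image_id]
  mul_mem' := by
    intro a b ha hb
    show ⇑(Φ (a * b)) '' U = U
    have h : ⇑(Φ (a * b)) = ⇑(Φ a) ∘ ⇑(Φ b) := funext fun z => hΦ.2 a b z
    rw [h, Set.image_comp]
    rw [show ⇑(Φ b) '' U = U from hb, show ⇑(Φ a) '' U = U from ha]
  inv_mem' := by
    intro a ha
    show ⇑(Φ a⁻¹) '' U = U
    have hcomp : ⇑(Φ a⁻¹) ∘ ⇑(Φ a) = id := funext fun z => by
      show Φ a⁻¹ (Φ a z) = z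
      have h2 := hΦ.2 a⁻¹ a z
      rw [inv_mul_cancel] at h2
      rw [← h2]
      exact hΦ.1 z
    calc ⇑(Φ a⁻¹) '' U = ⇑(Φ a⁻¹) '' (⇑(Φ a) '' U) := by
            rw [show ⇑(Φ a) '' U = U from ha]
      _ = (⇑(Φ a⁻¹) ∘ ⇑(Φ a)) '' U := (Set.image_comp _ _ _).symm
      _ = U := by rw [hcomp, Set.image_id]

end CantorActionDefs

section ChainDefs

variable {G : Type*} [Group G]

/-- A group chain in `G`: descending subgroups starting at `G`, each of finite index in
the previous one. -/
def IsGroupChain (K : ℕ → Subgroup G) : Prop :=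
  K 0 = ⊤ ∧ ∀ ℓ : ℕ, K (ℓ + 1) ≤ K ℓ ∧ (K (ℓ + 1)).relIndex (K ℓ) ≠ 0

/-- The inverse limit `lim← G ⧸ C ℓ` of the coset spaces along a chain, as a subset of
the product. -/
def chainLimitSet (C : ℕ → Subgroup G) : Set (∀ ℓ : ℕ, G ⧸ C ℓ) :=
  {σ | ∀ ℓ : ℕ, ∃ g : G, σ ℓ = (g : G ⧸ C ℓ) ∧ σ (ℓ + 1) = (g : G ⧸ C (ℓ + 1))}

/-- The inverse limit topology on `lim← G ⧸ C ℓ`: the subspace topology from the product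
of the discrete coset spaces. -/
def chainLimitTop (C : ℕ → Subgroup G) : TopologicalSpace (chainLimitSet C) :=
  TopologicalSpace.induced Subtype.val
    (@Pi.topologicalSpace ℕ (fun ℓ => G ⧸ C ℓ) fun _ => ⊥)

/-- The basepoint `(e C_ℓ)_ℓ` of the inverse limit. -/
def chainBasepoint (C : ℕ → Subgroup G) : chainLimitSet C :=
  ⟨fun ℓ => ((1 : G) : G ⧸ C ℓ), fun _ => ⟨1, rfl, rfl⟩⟩

theorem smul_mem_chainLimitSet {C : ℕ → Subgroup G} (g : G) {σ : ∀ ℓ : ℕ, G ⧸ C ℓ}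
    (hσ : σ ∈ chainLimitSet C) : (fun ℓ => g • σ ℓ) ∈ chainLimitSet C := by
  intro ℓ
  obtain ⟨k, h1, h2⟩ := hσ ℓ
  refine ⟨g * k, ?_, ?_⟩
  · show g • σ ℓ = _
    rw [h1]; rfl
  · show g • σ (ℓ + 1) = _
    rw [h2]; rfl

/-- The conjugate subgroup `g H g⁻¹`. -/
def conjSubgroup (g : G) (H : Subgroup G) : Subgroup G :=
  H.map (MulAut.conj g).toMonoidHom

/-- Equivalence of group chains (interlacing). -/
def ChainsEquivalent (Gc Hc : ℕ → Subgroup G) : Prop :=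
  ∃ K : ℕ → Subgroup G, IsGroupChain K ∧
    ∃ ls js : ℕ → ℕ, StrictMono ls ∧ StrictMono js ∧
      ∀ k : ℕ, K (2 * k) = Gc (ls k) ∧ K (2 * k + 1) = Hc (js k)

/-- Conjugate equivalence of group chains. -/
def ChainsConjugateEquivalent (Gc Hc : ℕ → Subgroup G) : Prop :=
  ∃ gs : ℕ → G, (∀ ℓ : ℕ, (gs ℓ)⁻¹ * gs (ℓ + 1) ∈ Gc ℓ) ∧
    ChainsEquivalent (fun ℓ => conjSubgroup (gs ℓ) (Gc ℓ)) Hc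

end ChainDefs

section TwoSpaces

variable {X : Type*} [MetricSpace X] {X' : Type*} [MetricSpace X']
variable {G : Type*} [Group G] {G' : Type*} [Group G']

/-- A continuous orbit equivalence between two actions, implemented by a homeomorphism
`h : X → X'` with locally constant orbit transfer functions. -/
def IsContinuousOrbitEquivalence (Φ : G → X ≃ₜ X) (Ψ : G' → X' ≃ₜ X') (h : X ≃ₜ X') :
    Prop :=
  (∀ (x : X) (g : G), ∃ (k : G') (O : Set X), IsOpen O ∧ x ∈ O ∧
      ∀ z ∈ O, Ψ k (h z) = h (Φ g z)) ∧
    ∀ (y : X') (k : G'), ∃ (g : G) (O : Set X'), IsOpen O ∧ y ∈ O ∧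
      ∀ w ∈ O, Φ g (h.symm w) = h.symm (Ψ k w)

end TwoSpaces

/-!
Suppose `K_m ⊆ Z_m` for some large `m`. Pick `a` with `Φ a x` in a clopen set `W₀` on which `f`
is the identity, and `m` with `Φ a (U m) ⊆ W₀`. Then `q = Φ a⁻¹ ∘ f ∘ Φ a` fixes `U m` pointwise,
so `q ∈ K_m = Z_m` commutes with `G_m`. As `G_m` has finite index, a Baire argument shows that
the closure of any `G_m`-orbit is a neighbourhood of its base point; so the `G_m`-orbit of
`Φ a⁻¹ x` enters one of the clopen sets `Φ a⁻¹ (W i)` fixed pointwise by `q`, and commutation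
pulls that set back to a clopen neighbourhood of `Φ a⁻¹ x` fixed by `q`. Conjugating back, `f`
is the identity near `x`, which a non-Hausdorff element is not.
-/
section

variable {X : Type*} [TopologicalSpace X] {G : Type*} {Φ : G → X ≃ₜ X}

theorem exists_isClopen_subset_fixedPoints_of_commute {H : Set G} {q : X → X}
    (hcomm : ∀ h ∈ H, ∀ z, q (Φ h z) = Φ h (q z)) {y : X}
    (hy : y ∈ interior (closure ((fun h => Φ h y) '' H))) {ys : ℕ → X} {W : ℕ → Set X}
    (hys : Tendsto ys atTop (𝓝 y))
    (hW : ∀ j, ys j ∈ W j ∧ IsClopen (W j) ∧ W j ⊆ Function.fixedPoints q) :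
    ∃ W' : Set X, IsClopen W' ∧ y ∈ W' ∧ W' ⊆ Function.fixedPoints q := by
  obtain ⟨j, hj⟩ := (hys.eventually (isOpen_interior.mem_nhds hy)).exists
  obtain ⟨hjW, hWclopen, hWfix⟩ := hW j
  obtain ⟨_, hhW, h, hH, rfl⟩ := mem_closure_iff.1 (interior_subset hj) _ hWclopen.isOpen hjW
  refine ⟨Φ h ⁻¹' W j, hWclopen.preimage (Φ h).continuous, hhW, fun z hz => ?_⟩
  exact (Φ h).injective ((hcomm h hH z).symm.trans (hWfix hz))

theorem eventually_subset_of_iInter_eq_singleton [CompactSpace X] {U : ℕ → Set X}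
    (hclosed : ∀ ℓ, IsClosed (U ℓ)) (hanti : Antitone U) {x : X} (hx : ⋂ ℓ, U ℓ = {x})
    {O : Set X} (hO : O ∈ 𝓝 x) : ∀ᶠ ℓ in atTop, U ℓ ⊆ O := by
  obtain ⟨m, hm⟩ := exists_subset_nhds_of_isCompact' hanti.directed_ge
    (fun ℓ => (hclosed ℓ).isCompact) hclosed (by simpa [hx] using hO)
  exact eventually_atTop.2 ⟨m, fun ℓ hℓ => (hanti hℓ).trans hm⟩

end

section CantorAction

variable {X : Type*} [MetricSpace X] {G : Type*} [Group G] {Φ : G → X ≃ₜ X}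

theorem IsActionHom.inv_apply_apply (hΦ : IsActionHom Φ) (g : G) (z : X) :
    Φ g⁻¹ (Φ g z) = z := by
  rw [← hΦ.2, inv_mul_cancel, hΦ.1]

theorem IsActionHom.apply_inv_apply (hΦ : IsActionHom Φ) (g : G) (z : X) :
    Φ g (Φ g⁻¹ z) = z := by
  simpa using hΦ.inv_apply_apply g⁻¹ z

theorem comp_mem_actionClosure (hΦ : IsActionHom Φ) {f : C(X, X)} (hf : f ∈ actionClosure Φ)
    (a b : G) : (Φ b : C(X, X)).comp (f.comp (Φ a : C(X, X))) ∈ actionClosure Φ := by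
  have hconj : Continuous fun h : C(X, X) => (Φ b : C(X, X)).comp (h.comp (Φ a : C(X, X))) :=
    (ContinuousMap.continuous_postcomp _).comp (ContinuousMap.continuous_precomp _)
  refine (map_mem_closure hconj hf ?_ :)
  rintro _ ⟨g, rfl⟩
  exact ⟨b * g * a, ContinuousMap.ext fun z => by simp [hΦ.2]⟩

/-- The centralizer group `Z_ℓ` of the paper. -/
def centralizerChain (Φ : G → X ≃ₜ X) (x : X) (U : ℕ → Set X) (ℓ : ℕ) : Set C(X, X) :=
  {h ∈ actionClosure Φ | h x = x ∧ ∀ g : G, Φ g '' U ℓ = U ℓ → ∀ z : X, h (Φ g z) = Φ g (h z)}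

theorem IsAdapted.subset_closure_orbit_setStabilizer (hΦ : IsActionHom Φ)
    (hmin : IsMinimalAction Φ) {U : Set X} (hU : IsAdapted Φ U) {x : X} (hx : x ∈ U) :
    U ⊆ closure ((fun g => Φ g x) '' setStabilizer Φ hΦ U) := by
  intro z hz
  refine mem_closure_iff.2 fun O hO hzO => ?_
  obtain ⟨_, ⟨g, rfl⟩, hgO, hgU⟩ :=
    (hmin x).exists_mem_open (hO.inter hU.2.1.isOpen) ⟨z, hzO, hz⟩
  exact ⟨Φ g x, hgO, g, hU.2.2 g ⟨Φ g x, mem_image_of_mem _ hx, hgU⟩, rfl⟩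

theorem centralizerChain_subset_stabChain (hΦ : IsActionHom Φ) (hmin : IsMinimalAction Φ)
    {x : X} {U : ℕ → Set X} {ℓ : ℕ} (hU : IsAdapted Φ (U ℓ)) (hx : x ∈ U ℓ) :
    centralizerChain Φ x U ℓ ⊆ stabChain Φ U ℓ := by
  rintro h ⟨hcl, hhx, hcomm⟩
  have horbit : (fun g => Φ g x) '' setStabilizer Φ hΦ (U ℓ) ⊆ Function.fixedPoints h := by
    rintro _ ⟨g, hg, rfl⟩
    exact (hcomm g hg x).trans (congrArg _ hhx)
  exact ⟨hcl, (hU.subset_closure_orbit_setStabilizer hΦ hmin hx).trans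
    (closure_minimal horbit (isClosed_eq h.continuous continuous_id))⟩

theorem IsAdapted.exists_finset_mul_mem_setStabilizer [CompactSpace X] (hΦ : IsActionHom Φ)
    (hmin : IsMinimalAction Φ) {V : Set X} (hV : IsAdapted Φ V) :
    ∃ t : Finset G, ∀ g : G, ∃ c ∈ t, c * g ∈ setStabilizer Φ hΦ V := by
  have hcover : univ ⊆ ⋃ c, Φ c ⁻¹' V := fun z _ => by
    obtain ⟨_, ⟨c, rfl⟩, hc⟩ := (hmin z).exists_mem_open hV.2.1.isOpen hV.1
    exact mem_iUnion.2 ⟨c, hc⟩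
  obtain ⟨t, ht⟩ := isCompact_univ.elim_finite_subcover _
    (fun c => hV.2.1.isOpen.preimage (Φ c).continuous) hcover
  obtain ⟨v, hv⟩ := hV.1
  refine ⟨t, fun g => ?_⟩
  obtain ⟨c, hct, hc⟩ := mem_iUnion₂.1 (ht (mem_univ (Φ g v)))
  refine ⟨c, hct, hV.2.2 _ ⟨Φ (c * g) v, mem_image_of_mem _ hv, ?_⟩⟩
  rw [hΦ.2]
  exact hc

/-- Finitely many translates of the closed set `closure (H • y)` cover `X`, so by Baire one of
them has interior; translating an interior orbit point back to `y` gives the claim. -/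
theorem mem_interior_closure_orbit_of_finset_mul_mem [BaireSpace X] (hΦ : IsActionHom Φ)
    (hmin : IsMinimalAction Φ) {H : Subgroup G} {t : Finset G} (ht : ∀ g, ∃ c ∈ t, c * g ∈ H)
    (y : X) : y ∈ interior (closure ((fun h => Φ h y) '' H)) := by
  have : Nonempty X := ⟨y⟩
  set C := closure ((fun h => Φ h y) '' H)
  have hcover : ⋃ c ∈ (t : Set G), Φ c ⁻¹' C = univ := by
    refine eq_univ_of_univ_subset ((hmin y).closure_eq ▸ closure_minimal ?_ ?_)
    · rintro _ ⟨g, rfl⟩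
      obtain ⟨c, hct, hcg⟩ := ht g
      exact mem_biUnion hct (subset_closure ⟨c * g, hcg, hΦ.2 c g y⟩)
    · exact t.finite_toSet.isClosed_biUnion fun c _ =>
        isClosed_closure.preimage (Φ c).continuous
  obtain ⟨w, hw⟩ := (dense_biUnion_interior_of_closed
    (fun c _ => isClosed_closure.preimage (Φ c).continuous) t.countable_toSet hcover).nonempty
  obtain ⟨c, -, hcw⟩ := mem_iUnion₂.1 hw
  rw [← (Φ c).preimage_interior] at hcw
  obtain ⟨_, hhC, h, hH, rfl⟩ :=
    mem_closure_iff.1 (interior_subset hcw) _ isOpen_interior hcw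
  have hinvariant : Φ h ⁻¹' C ⊆ C := by
    rw [(Φ h).preimage_closure]
    refine closure_mono ?_
    rintro z ⟨k, hk, hkz⟩
    exact ⟨h⁻¹ * k, H.mul_mem (H.inv_mem hH) hk, (hΦ.2 _ _ _).trans <| by
      rw [show Φ k y = Φ h z from hkz, hΦ.inv_apply_apply]⟩
  have hy : y ∈ Φ h ⁻¹' interior C := hhC
  rw [(Φ h).preimage_interior] at hy
  exact interior_mono hinvariant hy

theorem IsAdapted.mem_interior_closure_orbit_setStabilizer [CompactSpace X]
    (hΦ : IsActionHom Φ) (hmin : IsMinimalAction Φ) {V : Set X} (hV : IsAdapted Φ V) (y : X) :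
    y ∈ interior (closure ((fun g => Φ g y) '' setStabilizer Φ hΦ V)) :=
  have ⟨_, ht⟩ := hV.exists_finset_mul_mem_setStabilizer hΦ hmin
  mem_interior_closure_orbit_of_finset_mul_mem hΦ hmin ht y

theorem exists_ge_not_stabChain_subset_centralizerChain [CompactSpace X] (hΦ : IsActionHom Φ)
    (hmin : IsMinimalAction Φ) {f : C(X, X)} {x : X} (hf : IsNonHausdorffElem Φ f x)
    {U : ℕ → Set X} (hU : IsAdaptedBasis Φ x U) (N : ℕ) :
    ∃ m, N ≤ m ∧ ¬ stabChain Φ U m ⊆ centralizerChain Φ x U m := by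
  obtain ⟨hfcl, -, hfnot, xs, W, hxs, hW⟩ := hf
  obtain ⟨-, hUad, -, hUchain, hUinter⟩ := hU
  obtain ⟨_, ⟨a, rfl⟩, ha⟩ := (hmin x).exists_mem_open (hW 0).2.1.isOpen ⟨xs 0, (hW 0).1⟩
  have hUsmall := eventually_subset_of_iInter_eq_singleton (fun ℓ => (hUad ℓ).2.1.isClosed)
    (strictAnti_nat_of_succ_lt hUchain).antitone hUinter
    (((hW 0).2.1.isOpen.preimage (Φ a).continuous).mem_nhds ha)
  obtain ⟨m, hmN, hm⟩ := ((eventually_ge_atTop N).and hUsmall).exists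
  refine ⟨m, hmN, fun hKZ => ?_⟩
  set q : C(X, X) := (Φ a⁻¹ : C(X, X)).comp (f.comp (Φ a))
  have hqfix : ∀ j, Φ a ⁻¹' W j ⊆ Function.fixedPoints q := fun j z hz =>
    show Φ a⁻¹ (f (Φ a z)) = z by rw [(hW j).2.2.2 _ hz, hΦ.inv_apply_apply]
  obtain ⟨-, -, hqcomm⟩ := hKZ ⟨comp_mem_actionClosure hΦ hfcl a a⁻¹, hm.trans (hqfix 0)⟩
  obtain ⟨W', hW'clopen, hxW', hW'fix⟩ := exists_isClopen_subset_fixedPoints_of_commute hqcomm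
    ((hUad m).mem_interior_closure_orbit_setStabilizer hΦ hmin (Φ a⁻¹ x))
    (((Φ a⁻¹).continuous.tendsto x).comp hxs) fun j =>
      ⟨show Φ a (Φ a⁻¹ (xs j)) ∈ W j by rw [hΦ.apply_inv_apply]; exact (hW j).1,
        (hW j).2.1.preimage (Φ a).continuous, hqfix j⟩
  refine hfnot _ (hW'clopen.preimage (Φ a⁻¹).continuous) hxW' fun z hz => (Φ a⁻¹).injective ?_
  have hqz : Φ a⁻¹ (f (Φ a (Φ a⁻¹ z))) = Φ a⁻¹ z := hW'fix hz
  rwa [hΦ.apply_inv_apply] at hqz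

end CantorAction

theorem stmt18_general {X : Type*} [MetricSpace X] [CompactSpace X]
    {G : Type*} [Group G] (Φ : G → X ≃ₜ X) (hΦ : IsCantorAction Φ)
    (f : C(X, X)) (x : X) (hf : IsNonHausdorffElem Φ f x)
    (U : ℕ → Set X) (hU : IsAdaptedBasis Φ x U) :
    ∀ N : ℕ, ∃ ℓ : ℕ, N ≤ ℓ ∧
      {h ∈ actionClosure Φ | h x = x ∧
          ∀ g : G, Φ g '' U ℓ = U ℓ → ∀ z : X, h (Φ g z) = Φ g (h z)}
        ⊂ stabChain Φ U ℓ := by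
  intro N
  obtain ⟨ℓ, hℓN, hKZ⟩ := exists_ge_not_stabChain_subset_centralizerChain hΦ.1 hΦ.2.1 hf hU N
  have hZK := centralizerChain_subset_stabChain hΦ.1 hΦ.2.1 (hU.2.1 ℓ) (hU.2.2.1 ℓ)
  exact ⟨ℓ, hℓN, hZK.ssubset_of_not_subset hKZ⟩

/-- In the presence of a non-Hausdorff element at `x`, the centralizer
group `Z_ℓ` is a proper subset of the stabilizer group `K_ℓ` for infinitely many `ℓ`:
the action is dynamically wild. -/
theorem stmt18 {X : Type*} [MetricSpace X] [CompactSpace X] [TotallyDisconnectedSpace X]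
    [Nonempty X] (hX : Perfect (Set.univ : Set X))
    {G : Type*} [Group G] [Countable G] (Φ : G → X ≃ₜ X) (hΦ : IsCantorAction Φ)
    (f : C(X, X)) (x : X) (hf : IsNonHausdorffElem Φ f x)
    (U : ℕ → Set X) (hU : IsAdaptedBasis Φ x U) :
    ∀ N : ℕ, ∃ ℓ : ℕ, N ≤ ℓ ∧
      {h ∈ actionClosure Φ | h x = x ∧
          ∀ g : G, Φ g '' U ℓ = U ℓ → ∀ z : X, h (Φ g z) = Φ g (h z)}
        ⊂ stabChain Φ U ℓ :=
  stmt18_general Φ hΦ f x hf U hU
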